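/- Fix real numbers a, b, σ > 0, P > 0, γ > 0, and let 𝒞(x) := (1/2)log(1+x). For each positive integer n define F_n := max{ (1/2n) Σ_{i=1}^n log(1 + (μ_i/σ²)·|1+abλ_i|²/(1+b²|λ_i|²)) : μ ∈ ℝⁿ, λ ∈ ℂⁿ, μ_i ≥ 0 for all i, Σ_{i=1}^n μ_i ≤ nP, Σ_{i=1}^n (a²μ_i + σ²)|λ_i|² ≤ nγP }. Define C₅₀ := sup over τ ∈ ℝ^{50}, θ ∈ ℝ^{50}, λ̄ ∈ ℂ^{49} (indexed j = 0,…,49 for τ, θ and j = 1,…,49 for λ̄) with τ_j ≥ 0, θ_j ≥ 0, Σ_{j=0}^{49} τ_j = 1, Σ_{j=0}^{49} θ_j = 1, θ_j = 0 whenever τ_j = 0, and Σ_{j=1}^{49} |λ̄_j|²(a²θ_j P + τ_j σ²) ≤ γP, of the quantity τ₀·𝒞(θ₀P/(τ₀σ²)) + Σ_{j=1}^{49} τ_j·𝒞((θ_j/τ_j)·(P/σ²)·|1+abλ̄_j|²/(1+b²|λ̄_j|²)), where any term with τ_j = 0 is taken to be 0. Then lim_{n→∞} F_n = C₅₀. 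-/

import Mathlib

/-!
Achievability: a scheme that runs mode `j` (power density `m j`, relay gain `g j`) on a fraction
`τ j` of the band is realised on `n` bins by giving `⌊n τ j⌋` bins to mode `j`, which loses at most
`(∑ j, rate j) / n`.

Converse: the triples (rate, source power, relay power) of the `n` bins average to a point of the
convex hull of all such triples in `ℝ³`; by Carathéodory this point is a convex combination of four
triples, i.e. a four-mode scheme. The source power it leaves unused goes to a direct-transmission
mode on a vanishing fraction of the band.
-/

open Filter Topology

theorem tendsto_sSup_of_eventually_le_of_approx {α : Type*} {l : Filter α} {S : Set ℝ}
    {T : α → Set ℝ} (hS : S.Nonempty)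
    (hT : ∀ᶠ i in l, (T i).Nonempty ∧ ∀ x ∈ T i, x ≤ sSup S)
    (happrox : ∀ y ∈ S, ∀ ε > 0, ∀ᶠ i in l, ∃ x ∈ T i, y - ε ≤ x) :
    Tendsto (fun i => sSup (T i)) l (𝓝 (sSup S)) := by
  refine tendsto_order.2 ⟨fun c hc => ?_, fun c hc => ?_⟩
  · obtain ⟨y, hyS, hcy⟩ := exists_lt_of_lt_csSup hS hc
    filter_upwards [hT, happrox y hyS ((y - c) / 2) (by linarith)] with i ⟨_, hle⟩ ⟨x, hx, hyx⟩
    have := le_csSup ⟨sSup S, hle⟩ hx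
    linarith
  · filter_upwards [hT] with i ⟨hne, hle⟩
    exact (csSup_le hne hle).trans_lt hc

theorem exists_fin_padding {ι α : Type*} [Fintype ι] {K : ℕ} (hK : Fintype.card ι ≤ K)
    (d : ι → α) (z : α) :
    ∃ D : Fin K → α, (∀ j, D j = z ∨ D j ∈ Set.range d) ∧
      ∀ {M : Type*} [AddCommMonoid M] (φ : α → M), φ z = 0 → ∑ j, φ (D j) = ∑ i, φ (d i) := by
  let e : ι ⊕ Fin (K - Fintype.card ι) ≃ Fin K :=
    Fintype.equivFinOfCardEq (by simp; omega)
  refine ⟨fun j => Sum.elim d (fun _ => z) (e.symm j), fun j => ?_, fun φ hφ => ?_⟩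
  · dsimp only
    rcases e.symm j with i | k
    exacts [Or.inr ⟨i, rfl⟩, Or.inl rfl]
  · rw [e.symm.sum_comp (fun x => φ (Sum.elim d (fun _ => z) x)), Fintype.sum_sum_type]
    simp [hφ]

theorem exists_fin_convexCombination_of_mem_convexHull_image {𝕜 E α : Type*} [Field 𝕜]
    [LinearOrder 𝕜] [IsStrictOrderedRing 𝕜] [AddCommGroup E] [Module 𝕜 E]
    [FiniteDimensional 𝕜 E] {f : α → E} {s : Set α} {x : E} (hx : x ∈ convexHull 𝕜 (f '' s))
    {K : ℕ} (hK : Module.finrank 𝕜 E < K) :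
    ∃ (w : Fin K → 𝕜) (q : Fin K → α), (∀ j, 0 ≤ w j) ∧ ∑ j, w j = 1 ∧ (∀ j, q j ∈ s) ∧
      ∑ j, w j • f (q j) = x := by
  obtain ⟨q₀, hq₀⟩ := Set.image_nonempty.1 (convexHull_nonempty_iff.1 ⟨x, hx⟩)
  obtain ⟨ι, _, z, w, hzs, hz, hw, hw1, hwz⟩ := eq_pos_convex_span_of_mem_convexHull hx
  choose q hqs hqz using fun i => hzs (Set.mem_range_self i)
  have hcard : Fintype.card ι ≤ K :=
    hz.card_le_finrank_succ.trans (Nat.succ_le_of_lt ((Submodule.finrank_le _).trans_lt hK))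
  obtain ⟨D, hD, hsum⟩ := exists_fin_padding hcard (fun i => (w i, q i)) (0, q₀)
  have hsum' := hsum (fun p => (p.1, p.1 • f p.2)) (by simp)
  simp only [Prod.ext_iff, Prod.fst_sum, Prod.snd_sum, hqz] at hsum'
  refine ⟨fun j => (D j).1, fun j => (D j).2, fun j => ?_, hsum'.1.trans hw1, fun j => ?_,
    hsum'.2.trans hwz⟩
  · rcases hD j with h | ⟨i, h⟩
    exacts [by simp [h], by simp [← h, (hw i).le]]
  · rcases hD j with h | ⟨i, h⟩
    exacts [by simp [h, hq₀], by simp [← h, hqs i]]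

theorem mul_apply_mul_div_self {G : Type*} [CommGroupWithZero G] (f : G → G) (τ x : G) :
    τ * f (τ * x / τ) = τ * f x := by
  rcases eq_or_ne τ 0 with rfl | hτ
  · simp
  · rw [mul_div_cancel_left₀ x hτ]

namespace LTIRelay

noncomputable def rate (a b σ μ : ℝ) (l : ℂ) : ℝ :=
  1 / 2 * Real.log (1 + μ / σ ^ 2 * ‖1 + ((a * b : ℝ) : ℂ) * l‖ ^ 2 / (1 + b ^ 2 * ‖l‖ ^ 2))

noncomputable def relayPower (a σ μ : ℝ) (l : ℂ) : ℝ := (a ^ 2 * μ + σ ^ 2) * ‖l‖ ^ 2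

variable {a b σ μ : ℝ} {l : ℂ}

theorem norm_one_add_mul_sq_div_le :
    ‖1 + ((a * b : ℝ) : ℂ) * l‖ ^ 2 / (1 + b ^ 2 * ‖l‖ ^ 2) ≤ 1 + a ^ 2 := by
  rw [div_le_iff₀ (by positivity)]
  have h := (norm_add_le 1 (((a * b : ℝ) : ℂ) * l)).trans_eq
    (by rw [norm_one, norm_mul, Complex.norm_real, Real.norm_eq_abs, abs_mul])
  calc ‖1 + ((a * b : ℝ) : ℂ) * l‖ ^ 2 ≤ (1 + |a| * (|b| * ‖l‖)) ^ 2 := by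
        gcongr; linarith
    _ = (1 + a ^ 2) * (1 + b ^ 2 * ‖l‖ ^ 2) - (|a| - |b| * ‖l‖) ^ 2 := by
        linear_combination (1 + |b| ^ 2 * ‖l‖ ^ 2) * sq_abs a + (1 + a ^ 2) * ‖l‖ ^ 2 * sq_abs b
    _ ≤ (1 + a ^ 2) * (1 + b ^ 2 * ‖l‖ ^ 2) := sub_le_self _ (sq_nonneg _)

theorem rate_nonneg (hμ : 0 ≤ μ) : 0 ≤ rate a b σ μ l :=
  mul_nonneg (by norm_num) (Real.log_nonneg (le_add_of_nonneg_right (by positivity)))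

@[simp] theorem rate_zero_left : rate a b σ 0 l = 0 := by simp [rate]

theorem rate_le (hμ : 0 ≤ μ) : rate a b σ μ l ≤ (1 + a ^ 2) / (2 * σ ^ 2) * μ := by
  have hgain := norm_one_add_mul_sq_div_le (a := a) (b := b) (l := l)
  have hlog := Real.log_le_sub_one_of_pos (x := 1 + μ / σ ^ 2 * ‖1 + ((a * b : ℝ) : ℂ) * l‖ ^ 2
    / (1 + b ^ 2 * ‖l‖ ^ 2)) (by positivity)
  calc rate a b σ μ l ≤ 1 / 2 * (μ / σ ^ 2 * ‖1 + ((a * b : ℝ) : ℂ) * l‖ ^ 2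
      / (1 + b ^ 2 * ‖l‖ ^ 2)) := by unfold rate; linarith
    _ ≤ 1 / 2 * (μ / σ ^ 2 * (1 + a ^ 2)) := by rw [mul_div_assoc]; gcongr
    _ = (1 + a ^ 2) / (2 * σ ^ 2) * μ := by ring

theorem relayPower_nonneg (hμ : 0 ≤ μ) : 0 ≤ relayPower a σ μ l := by
  unfold relayPower; positivity

@[simp] theorem relayPower_zero_right : relayPower a σ μ 0 = 0 := by simp [relayPower]

-- `Fₙ = sSup (binRates a b σ P γ n)` and `C₅₀ = sSup (modeRates a b σ P γ 49)`.
def binRates (a b σ P γ : ℝ) (n : ℕ) : Set ℝ :=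
  {x : ℝ | ∃ (μ : Fin n → ℝ) (l : Fin n → ℂ),
      (∀ i, 0 ≤ μ i) ∧ (∑ i, μ i ≤ (n : ℝ) * P) ∧
      (∑ i, (a ^ 2 * μ i + σ ^ 2) * ‖l i‖ ^ 2 ≤ (n : ℝ) * γ * P) ∧
      x = (1 / (2 * (n : ℝ))) * ∑ i, Real.log
        (1 + (μ i / σ ^ 2) * ‖1 + ((a * b : ℝ) : ℂ) * l i‖ ^ 2
          / (1 + b ^ 2 * ‖l i‖ ^ 2))}

def modeRates (a b σ P γ : ℝ) (K : ℕ) : Set ℝ :=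
  {x : ℝ | ∃ (τ θ : Fin (K + 1) → ℝ) (lb : Fin K → ℂ),
    (∀ j, 0 ≤ τ j) ∧ (∀ j, 0 ≤ θ j) ∧
    (∑ j, τ j = 1) ∧ (∑ j, θ j = 1) ∧
    (∀ j, τ j = 0 → θ j = 0) ∧
    (∑ j : Fin K, ‖lb j‖ ^ 2 * (a ^ 2 * θ j.succ * P + τ j.succ * σ ^ 2) ≤ γ * P) ∧
    x = τ 0 * ((1 / 2) * Real.log (1 + θ 0 * P / (τ 0 * σ ^ 2)))
      + ∑ j : Fin K, τ j.succ * ((1 / 2) * Real.log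
          (1 + (θ j.succ / τ j.succ) * (P / σ ^ 2)
            * ‖1 + ((a * b : ℝ) : ℂ) * lb j‖ ^ 2 / (1 + b ^ 2 * ‖lb j‖ ^ 2)))}

variable {P γ : ℝ} {n K : ℕ}

theorem mem_binRates_iff {x : ℝ} : x ∈ binRates a b σ P γ n ↔
    ∃ (μ : Fin n → ℝ) (l : Fin n → ℂ), (∀ i, 0 ≤ μ i) ∧ ∑ i, μ i ≤ n * P ∧
      ∑ i, relayPower a σ (μ i) (l i) ≤ n * γ * P ∧ (∑ i, rate a b σ (μ i) (l i)) / n = x := by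
  have hval (μ : Fin n → ℝ) (l : Fin n → ℂ) : (1 / (2 * (n : ℝ))) * ∑ i, Real.log
      (1 + (μ i / σ ^ 2) * ‖1 + ((a * b : ℝ) : ℂ) * l i‖ ^ 2 / (1 + b ^ 2 * ‖l i‖ ^ 2))
      = (∑ i, rate a b σ (μ i) (l i)) / n := by
    simp only [rate, ← Finset.mul_sum]; ring
  simp only [binRates, relayPower, Set.mem_ofPred_eq, hval, eq_comm (a := x)]

theorem modeValue_eq_sum (τ θ : Fin (K + 1) → ℝ) (lb : Fin K → ℂ) :
    τ 0 * ((1 / 2) * Real.log (1 + θ 0 * P / (τ 0 * σ ^ 2)))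
      + ∑ j : Fin K, τ j.succ * ((1 / 2) * Real.log
          (1 + (θ j.succ / τ j.succ) * (P / σ ^ 2)
            * ‖1 + ((a * b : ℝ) : ℂ) * lb j‖ ^ 2 / (1 + b ^ 2 * ‖lb j‖ ^ 2)))
      = ∑ j, τ j * rate a b σ (θ j * P / τ j) ((Fin.cons 0 lb : Fin (K + 1) → ℂ) j) := by
  rw [Fin.sum_univ_succ]
  simp only [rate, Fin.cons_zero, Fin.cons_succ]
  congr 1
  · simp [div_div]
  · refine Finset.sum_congr rfl fun j _ => ?_
    ring_nf

theorem modeRelay_eq_sum {τ θ : Fin (K + 1) → ℝ} (hτθ : ∀ j, τ j = 0 → θ j = 0)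
    (lb : Fin K → ℂ) :
    ∑ j : Fin K, ‖lb j‖ ^ 2 * (a ^ 2 * θ j.succ * P + τ j.succ * σ ^ 2)
      = ∑ j, τ j * relayPower a σ (θ j * P / τ j) ((Fin.cons 0 lb : Fin (K + 1) → ℂ) j) := by
  rw [Fin.sum_univ_succ]
  simp only [relayPower, Fin.cons_zero, Fin.cons_succ, norm_zero]
  have hterm (j : Fin K) : τ j.succ * ((a ^ 2 * (θ j.succ * P / τ j.succ) + σ ^ 2) * ‖lb j‖ ^ 2)
      = ‖lb j‖ ^ 2 * (a ^ 2 * θ j.succ * P + τ j.succ * σ ^ 2) := by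
    have h := mul_div_cancel_of_imp' (a := θ j.succ * P) (b := τ j.succ)
      (fun h => by simp [hτθ _ h])
    linear_combination a ^ 2 * ‖lb j‖ ^ 2 * h
  simp [hterm]

/- `m j = θ j * P / τ j` is the power density of mode `j`; its junk value at `τ j = 0` is harmless
because every term containing it carries the factor `τ j`. -/
theorem mem_modeRates_iff (hP : 0 < P) {x : ℝ} : x ∈ modeRates a b σ P γ K ↔
    ∃ (τ m : Fin (K + 1) → ℝ) (g : Fin (K + 1) → ℂ), g 0 = 0 ∧ (∀ j, 0 ≤ τ j) ∧
      (∀ j, 0 ≤ m j) ∧ ∑ j, τ j = 1 ∧ ∑ j, τ j * m j = P ∧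
      ∑ j, τ j * relayPower a σ (m j) (g j) ≤ γ * P ∧ ∑ j, τ j * rate a b σ (m j) (g j) = x := by
  constructor
  · rintro ⟨τ, θ, lb, hτ, hθ, hτ1, hθ1, hτθ, hrelay, rfl⟩
    refine ⟨τ, fun j => θ j * P / τ j, Fin.cons 0 lb, rfl, hτ,
      fun j => div_nonneg (mul_nonneg (hθ j) hP.le) (hτ j), hτ1, ?_,
      (modeRelay_eq_sum hτθ lb).symm.trans_le hrelay, (modeValue_eq_sum τ θ lb).symm⟩
    calc ∑ j, τ j * (θ j * P / τ j) = ∑ j, θ j * P :=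
          Finset.sum_congr rfl fun j _ => mul_div_cancel_of_imp' fun h => by simp [hτθ j h]
      _ = P := by rw [← Finset.sum_mul, hθ1, one_mul]
  · rintro ⟨τ, m, g, hg, hτ, hm, hτ1, hτm, hrelay, rfl⟩
    have hτθ (j) (h : τ j = 0) : τ j * m j / P = 0 := by simp [h]
    have hcons : (Fin.cons 0 (Fin.tail g) : Fin (K + 1) → ℂ) = g := hg ▸ Fin.cons_self_tail g
    have hpow (j) (f : ℝ → ℝ) : τ j * f (τ j * m j / P * P / τ j) = τ j * f (m j) := by
      rw [div_mul_cancel₀ _ hP.ne', mul_apply_mul_div_self]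
    refine ⟨τ, fun j => τ j * m j / P, Fin.tail g, hτ,
      fun j => div_nonneg (mul_nonneg (hτ j) (hm j)) hP.le, hτ1,
      by rw [← Finset.sum_div, hτm, div_self hP.ne'], hτθ, ?_, ?_⟩
    · rw [modeRelay_eq_sum hτθ, hcons]
      exact (Finset.sum_congr rfl fun j _ => hpow j (relayPower a σ · (g j))).trans_le hrelay
    · refine ((modeValue_eq_sum τ (fun j => τ j * m j / P) (Fin.tail g)).trans ?_).symm
      rw [hcons]
      exact Finset.sum_congr rfl fun j _ => hpow j (rate a b σ · (g j))

theorem modeRates_nonempty (hP : 0 < P) (hγ : 0 ≤ γ) : (modeRates a b σ P γ K).Nonempty :=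
  ⟨_, (mem_modeRates_iff hP).2 ⟨fun _ => 1 / (K + 1), fun _ => P, 0, rfl, fun _ => by positivity,
    fun _ => hP.le, by simp; field_simp, by simp; field_simp, by simp; positivity, rfl⟩⟩

theorem modeRates_bddAbove (hP : 0 < P) : BddAbove (modeRates a b σ P γ K) := by
  refine ⟨(1 + a ^ 2) / (2 * σ ^ 2) * P, fun x hx => ?_⟩
  obtain ⟨τ, m, g, -, hτ, hm, -, hτm, -, rfl⟩ := (mem_modeRates_iff hP).1 hx
  calc ∑ j, τ j * rate a b σ (m j) (g j) ≤ ∑ j, τ j * ((1 + a ^ 2) / (2 * σ ^ 2) * m j) :=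
        Finset.sum_le_sum fun j _ => mul_le_mul_of_nonneg_left (rate_le (hm j)) (hτ j)
    _ = (1 + a ^ 2) / (2 * σ ^ 2) * P := by simp_rw [mul_left_comm (τ _), ← Finset.mul_sum, hτm]

theorem exists_mem_modeRates_mul_sum_mul_rate_le (hP : 0 < P) {w m : Fin K → ℝ} {g : Fin K → ℂ}
    (hw : ∀ j, 0 ≤ w j) (hw1 : ∑ j, w j = 1) (hm : ∀ j, 0 ≤ m j) (hwm : ∑ j, w j * m j ≤ P)
    (hrelay : ∑ j, w j * relayPower a σ (m j) (g j) ≤ γ * P) {t : ℝ} (ht0 : 0 < t) (ht1 : t < 1) :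
    ∃ y ∈ modeRates a b σ P γ K, t * ∑ j, w j * rate a b σ (m j) (g j) ≤ y := by
  -- mode powers must add up to exactly `P`, so the direct mode takes the rest on the band `1 - t`
  have ht1' : 0 < 1 - t := sub_pos.2 ht1
  have hm₀ : 0 ≤ (P - t * ∑ j, w j * m j) / (1 - t) := by
    refine div_nonneg (sub_nonneg.2 ?_) ht1'.le
    nlinarith [Finset.sum_nonneg fun j (_ : j ∈ Finset.univ) => mul_nonneg (hw j) (hm j)]
  refine ⟨_, (mem_modeRates_iff hP).2 ⟨Fin.cons (1 - t) (fun j => t * w j),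
    Fin.cons ((P - t * ∑ j, w j * m j) / (1 - t)) m, Fin.cons 0 g, rfl,
    Fin.cases ht1'.le fun j => mul_nonneg ht0.le (hw j), Fin.cases hm₀ hm, ?_, ?_, ?_, rfl⟩, ?_⟩
  · simp [Fin.sum_univ_succ, ← Finset.mul_sum, hw1]
  · simp only [Fin.sum_univ_succ, Fin.cons_zero, Fin.cons_succ, mul_assoc, ← Finset.mul_sum]
    field_simp
    ring
  · simp only [Fin.sum_univ_succ, Fin.cons_zero, Fin.cons_succ, relayPower_zero_right, mul_zero,
      zero_add, mul_assoc, ← Finset.mul_sum]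
    have := Finset.sum_nonneg fun j (_ : j ∈ Finset.univ) =>
      mul_nonneg (hw j) (relayPower_nonneg (a := a) (σ := σ) (l := g j) (hm j))
    nlinarith
  · simp only [Fin.sum_univ_succ, Fin.cons_zero, Fin.cons_succ, mul_assoc, ← Finset.mul_sum]
    exact le_add_of_nonneg_left (mul_nonneg ht1'.le (rate_nonneg hm₀))

theorem sum_mul_rate_le_sSup_modeRates (hP : 0 < P) {w m : Fin K → ℝ} {g : Fin K → ℂ}
    (hw : ∀ j, 0 ≤ w j) (hw1 : ∑ j, w j = 1) (hm : ∀ j, 0 ≤ m j) (hwm : ∑ j, w j * m j ≤ P)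
    (hrelay : ∑ j, w j * relayPower a σ (m j) (g j) ≤ γ * P) :
    ∑ j, w j * rate a b σ (m j) (g j) ≤ sSup (modeRates a b σ P γ K) := by
  set R := ∑ j, w j * rate a b σ (m j) (g j)
  have hlim : Tendsto (fun t => t * R) (𝓝[<] 1) (𝓝 R) :=
    ((continuous_id.mul continuous_const).tendsto' 1 R (one_mul R)).mono_left nhdsWithin_le_nhds
  refine le_of_tendsto hlim ?_
  filter_upwards [Ioo_mem_nhdsLT zero_lt_one] with t ⟨ht0, ht1⟩
  obtain ⟨y, hy, hty⟩ := exists_mem_modeRates_mul_sum_mul_rate_le hP hw hw1 hm hwm hrelay ht0 ht1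
  exact hty.trans (le_csSup (modeRates_bddAbove hP) hy)

theorem binRates_nonempty (hP : 0 ≤ P) (hγ : 0 ≤ γ) : (binRates a b σ P γ n).Nonempty :=
  ⟨_, mem_binRates_iff.2 ⟨0, 0, fun _ => le_rfl, by simp; positivity, by simp; positivity, rfl⟩⟩

theorem exists_timeSharing_of_mem_binRates (hK : 3 < K) (hn : 0 < n) {x : ℝ}
    (hx : x ∈ binRates a b σ P γ n) :
    ∃ (w m : Fin K → ℝ) (g : Fin K → ℂ), (∀ j, 0 ≤ w j) ∧ ∑ j, w j = 1 ∧ (∀ j, 0 ≤ m j) ∧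
      ∑ j, w j * m j ≤ P ∧ ∑ j, w j * relayPower a σ (m j) (g j) ≤ γ * P ∧
      ∑ j, w j * rate a b σ (m j) (g j) = x := by
  obtain ⟨μ, l, hμ, hpow, hrelay, rfl⟩ := mem_binRates_iff.1 hx
  let f : ℝ × ℂ → ℝ × ℝ × ℝ := fun p => (rate a b σ p.1 p.2, p.1, relayPower a σ p.1 p.2)
  have hn' : (0 : ℝ) < n := Nat.cast_pos.2 hn
  have hmem : ∑ i, (n : ℝ)⁻¹ • f (μ i, l i) ∈ convexHull ℝ (f '' {p | 0 ≤ p.1}) :=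
    (convex_convexHull ℝ _).sum_mem (fun _ _ => by positivity) (by simp [hn'.ne'])
      fun i _ => subset_convexHull ℝ _ ⟨(μ i, l i), hμ i, rfl⟩
  obtain ⟨w, q, hw, hw1, hq, hwq⟩ :=
    exists_fin_convexCombination_of_mem_convexHull_image hmem (by simpa using hK)
  simp only [f, Prod.ext_iff, Prod.fst_sum, Prod.snd_sum, Prod.smul_mk, smul_eq_mul,
    ← Finset.mul_sum] at hwq
  obtain ⟨hwrate, hwpow, hwrelay⟩ := hwq
  refine ⟨w, fun j => (q j).1, fun j => (q j).2, hw, hw1, hq, ?_, ?_, ?_⟩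
  · rw [hwpow, inv_mul_le_iff₀ hn']
    exact hpow
  · rw [hwrelay, inv_mul_le_iff₀ hn', ← mul_assoc]
    exact hrelay
  · rw [hwrate, inv_mul_eq_div]

theorem le_sSup_modeRates_of_mem_binRates (hP : 0 < P) (hK : 3 < K) (hn : 0 < n) {x : ℝ}
    (hx : x ∈ binRates a b σ P γ n) : x ≤ sSup (modeRates a b σ P γ K) := by
  obtain ⟨w, m, g, hw, hw1, hm, hwm, hrelay, rfl⟩ := exists_timeSharing_of_mem_binRates hK hn hx
  exact sum_mul_rate_le_sSup_modeRates hP hw hw1 hm hwm hrelay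

theorem exists_bins_of_timeSharing {ι : Type*} [Fintype ι] {τ m : ι → ℝ} (g : ι → ℂ)
    (hτ : ∀ j, 0 ≤ τ j) (hτ1 : ∑ j, τ j ≤ 1) (hm : ∀ j, 0 ≤ m j) (n : ℕ) :
    ∃ (μ : Fin n → ℝ) (l : Fin n → ℂ), (∀ i, 0 ≤ μ i) ∧ ∑ i, μ i ≤ n * ∑ j, τ j * m j ∧
      ∑ i, relayPower a σ (μ i) (l i) ≤ n * ∑ j, τ j * relayPower a σ (m j) (g j) ∧
      n * ∑ j, τ j * rate a b σ (m j) (g j) - ∑ j, rate a b σ (m j) (g j)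
        ≤ ∑ i, rate a b σ (μ i) (l i) := by
  let c : ι → ℕ := fun j => ⌊n * τ j⌋₊
  have hc : ∑ j, c j ≤ n := by
    have : (∑ j, c j : ℝ) ≤ n := calc
      (∑ j, c j : ℝ) ≤ ∑ j, n * τ j :=
        Finset.sum_le_sum fun j _ => Nat.floor_le (mul_nonneg n.cast_nonneg (hτ j))
      _ ≤ n := by rw [← Finset.mul_sum]; exact mul_le_of_le_one_right n.cast_nonneg hτ1
    exact_mod_cast this
  obtain ⟨D, hD, hsum⟩ := exists_fin_padding (ι := Σ j, Fin (c j)) (by simpa using hc)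
    (fun k => (m k.1, g k.1)) (0, 0)
  have hmult (φ : ℝ × ℂ → ℝ) (hφ : φ (0, 0) = 0) :
      ∑ i, φ (D i) = ∑ j, (c j : ℝ) * φ (m j, g j) := by
    rw [hsum φ hφ, Fintype.sum_sigma]
    simp
  have hc_le (j) {v : ℝ} (hv : 0 ≤ v) : (c j : ℝ) * v ≤ n * (τ j * v) := by
    rw [← mul_assoc]
    exact mul_le_mul_of_nonneg_right (Nat.floor_le (mul_nonneg n.cast_nonneg (hτ j))) hv
  have hc_ge (j) {v : ℝ} (hv : 0 ≤ v) : n * (τ j * v) - v ≤ (c j : ℝ) * v := by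
    nlinarith [Nat.sub_one_lt_floor ((n : ℝ) * τ j)]
  refine ⟨fun i => (D i).1, fun i => (D i).2, fun i => ?_, ?_, ?_, ?_⟩
  · rcases hD i with h | ⟨k, h⟩
    exacts [by simp [h], by simp [← h, hm]]
  · rw [hmult Prod.fst rfl, Finset.mul_sum]
    exact Finset.sum_le_sum fun j _ => hc_le j (hm j)
  · rw [hmult (fun p => relayPower a σ p.1 p.2) (by simp), Finset.mul_sum]
    exact Finset.sum_le_sum fun j _ => hc_le j (relayPower_nonneg (hm j))
  · rw [hmult (fun p => rate a b σ p.1 p.2) (by simp), Finset.mul_sum, ← Finset.sum_sub_distrib]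
    exact Finset.sum_le_sum fun j _ => hc_ge j (rate_nonneg (hm j))

theorem eventually_exists_mem_binRates_ge (hP : 0 < P) {y : ℝ} (hy : y ∈ modeRates a b σ P γ K)
    {ε : ℝ} (hε : 0 < ε) : ∀ᶠ n in atTop, ∃ x ∈ binRates a b σ P γ n, y - ε ≤ x := by
  obtain ⟨τ, m, g, -, hτ, hm, hτ1, hτm, hrelay, rfl⟩ := (mem_modeRates_iff hP).1 hy
  filter_upwards [eventually_gt_atTop 0, (tendsto_order.1
    (tendsto_const_div_atTop_nhds_zero_nat (∑ j, rate a b σ (m j) (g j)))).2 ε hε] with n hn hRn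
  obtain ⟨μ, l, hμ, hpow, hrel, hrate⟩ := exists_bins_of_timeSharing g hτ hτ1.le hm n
  have hn' : (0 : ℝ) < n := Nat.cast_pos.2 hn
  refine ⟨_, mem_binRates_iff.2 ⟨μ, l, hμ, hτm ▸ hpow, ?_, rfl⟩, ?_⟩
  · rw [mul_assoc]
    exact hrel.trans (mul_le_mul_of_nonneg_left hrelay n.cast_nonneg)
  · rw [div_lt_iff₀ hn'] at hRn
    rw [le_div_iff₀ hn']
    nlinarith

end LTIRelay

open LTIRelay

theorem lti_capacity_fifty_modes_general (a b σ P γ : ℝ) (hP : 0 < P)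
    (hγ : 0 < γ) (F : ℕ → ℝ)
    (hF : ∀ n : ℕ, 0 < n → F n = sSup {x : ℝ | ∃ (μ : Fin n → ℝ) (l : Fin n → ℂ),
      (∀ i, 0 ≤ μ i) ∧ (∑ i, μ i ≤ (n : ℝ) * P) ∧
      (∑ i, (a ^ 2 * μ i + σ ^ 2) * ‖l i‖ ^ 2 ≤ (n : ℝ) * γ * P) ∧
      x = (1 / (2 * (n : ℝ))) * ∑ i, Real.log
        (1 + (μ i / σ ^ 2) * ‖1 + ((a * b : ℝ) : ℂ) * l i‖ ^ 2
          / (1 + b ^ 2 * ‖l i‖ ^ 2))}) :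
    Tendsto F atTop (nhds (sSup {x : ℝ |
      ∃ (τ θ : Fin 50 → ℝ) (lb : Fin 49 → ℂ),
        (∀ j, 0 ≤ τ j) ∧ (∀ j, 0 ≤ θ j) ∧
        (∑ j, τ j = 1) ∧ (∑ j, θ j = 1) ∧
        (∀ j, τ j = 0 → θ j = 0) ∧
        (∑ j : Fin 49, ‖lb j‖ ^ 2 * (a ^ 2 * θ j.succ * P + τ j.succ * σ ^ 2) ≤ γ * P) ∧
        x = τ 0 * ((1 / 2) * Real.log (1 + θ 0 * P / (τ 0 * σ ^ 2)))
          + ∑ j : Fin 49, τ j.succ * ((1 / 2) * Real.log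
              (1 + (θ j.succ / τ j.succ) * (P / σ ^ 2)
                * ‖1 + ((a * b : ℝ) : ℂ) * lb j‖ ^ 2 / (1 + b ^ 2 * ‖lb j‖ ^ 2)))})) := by
  have hbins : ∀ᶠ n in atTop, (binRates a b σ P γ n).Nonempty ∧
      ∀ x ∈ binRates a b σ P γ n, x ≤ sSup (modeRates a b σ P γ 49) := by
    filter_upwards [eventually_gt_atTop 0] with n hn
    exact ⟨binRates_nonempty hP.le hγ.le,
      fun x hx => le_sSup_modeRates_of_mem_binRates hP (by norm_num) hn hx⟩
  refine (tendsto_sSup_of_eventually_le_of_approx (modeRates_nonempty hP hγ.le) hbins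
    fun y hy ε hε => eventually_exists_mem_binRates_ge hP hy hε).congr' ?_
  filter_upwards [eventually_gt_atTop 0] with n hn
  exact (hF n hn).symm

/-- Finite-letter capacity of the LTI Gaussian relay channel (Theorem 2): the
maximum `n`-bin LTI relaying rate `Fₙ` converges to the 50-mode expression `C₅₀`
with complex instantaneous amplify-and-forward gains. -/
theorem lti_capacity_fifty_modes (a b σ P γ : ℝ) (hσ : 0 < σ) (hP : 0 < P)
    (hγ : 0 < γ) (F : ℕ → ℝ)
    (hF : ∀ n : ℕ, 0 < n → F n = sSup {x : ℝ | ∃ (μ : Fin n → ℝ) (l : Fin n → ℂ),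
      (∀ i, 0 ≤ μ i) ∧ (∑ i, μ i ≤ (n : ℝ) * P) ∧
      (∑ i, (a ^ 2 * μ i + σ ^ 2) * ‖l i‖ ^ 2 ≤ (n : ℝ) * γ * P) ∧
      x = (1 / (2 * (n : ℝ))) * ∑ i, Real.log
        (1 + (μ i / σ ^ 2) * ‖1 + ((a * b : ℝ) : ℂ) * l i‖ ^ 2
          / (1 + b ^ 2 * ‖l i‖ ^ 2))}) :
    Tendsto F atTop (nhds (sSup {x : ℝ |
      ∃ (τ θ : Fin 50 → ℝ) (lb : Fin 49 → ℂ),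
        (∀ j, 0 ≤ τ j) ∧ (∀ j, 0 ≤ θ j) ∧
        (∑ j, τ j = 1) ∧ (∑ j, θ j = 1) ∧
        (∀ j, τ j = 0 → θ j = 0) ∧
        (∑ j : Fin 49, ‖lb j‖ ^ 2 * (a ^ 2 * θ j.succ * P + τ j.succ * σ ^ 2) ≤ γ * P) ∧
        x = τ 0 * ((1 / 2) * Real.log (1 + θ 0 * P / (τ 0 * σ ^ 2)))
          + ∑ j : Fin 49, τ j.succ * ((1 / 2) * Real.log
              (1 + (θ j.succ / τ j.succ) * (P / σ ^ 2)
                * ‖1 + ((a * b : ℝ) : ℂ) * lb j‖ ^ 2 / (1 + b ^ 2 * ‖lb j‖ ^ 2)))})) :=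
  lti_capacity_fifty_modes_general a b σ P γ hP hγ F hF
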